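/- The relative entropy between two product Bernoulli measures whose parameters are close is of order n/k: if μ is the product Bernoulli measure on {0,1}^{nk} with μ(η(x)=1)=γ(x/(nk)) and ν is the product Bernoulli measure with ν(η(x)=1)=γ(⌊x/n⌋/k), where γ : [0,1] → (ε₀, 1−ε₀) is κ-Lipschitz for some ε₀ ∈ (0,1/2), then H(μ|ν) ≤ C(ε₀,κ) · n for a constant C(ε₀,κ) independent of n and k. -/

import Mathlib

open MeasureTheory

/-- The Bernoulli measure on `Bool` with parameter `p`. -/
noncomputable def bern (p : ℝ) : Measure Bool :=
  (ENNReal.ofReal p) • Measure.dirac true + (ENNReal.ofReal (1 - p)) • Measure.dirac false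

/-- Relative entropy `H(μ|ν) = ∑_η μ(η) log (μ(η)/ν(η))` between two measures on a
finite configuration space. -/
noncomputable def relEnt {Λ : Type*} [Fintype Λ] [DecidableEq Λ] (μ ν : Measure (Λ → Bool)) : ℝ :=
  ∑ η : Λ → Bool, (μ {η}).toReal * Real.log ((μ {η}).toReal / (ν {η}).toReal)

instance (p : ℝ) : IsFiniteMeasure (bern p) := by
  constructor
  simp [bern]

lemma bern_singleton (p : ℝ) (b : Bool) :
    bern p {b} = ENNReal.ofReal (if b then p else 1 - p) := by
  cases b <;>
    simp [bern, Measure.dirac_apply' _ (measurableSet_singleton _)]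

lemma pi_bern_singleton {m : ℕ} (p : Fin m → ℝ) (η : Fin m → Bool) :
    (Measure.pi fun x => bern (p x)) {η}
      = ∏ x, ENNReal.ofReal (if η x then p x else 1 - p x) := by
  rw [← Set.univ_pi_singleton η, Measure.pi_pi]
  simp [bern_singleton]

lemma log_ratio_le {ε₀ : ℝ} (hε : 0 < ε₀) {a b d : ℝ} (hb : ε₀ ≤ b) (ha : 0 < a)
    (hab : |a - b| ≤ d) : Real.log (a / b) ≤ d / ε₀ := by
  have hb0 : 0 < b := lt_of_lt_of_le hε hb
  have h1 : Real.log (a / b) ≤ a / b - 1 := Real.log_le_sub_one_of_pos (div_pos ha hb0)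
  have h2 : a / b - 1 = (a - b) / b := by field_simp
  rw [h2] at h1
  exact h1.trans (div_le_div₀ ((abs_nonneg _).trans hab) ((le_abs_self _).trans hab) hε hb)

lemma close_frac (n k : ℕ) (hn : 1 ≤ n) (hk : 1 ≤ k) (x : Fin (n * k)) :
    |(x : ℝ) / (n * k) - (((x : ℕ) / n : ℕ) : ℝ) / k| ≤ 1 / k := by
  have hn0 : (0:ℝ) < n := by exact_mod_cast hn
  have hk0 : (0:ℝ) < k := by exact_mod_cast hk
  set i : ℕ := (x : ℕ) / n with hi
  have h1 : (i * n : ℝ) ≤ (x : ℕ) := by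
    exact_mod_cast Nat.div_mul_le_self (x : ℕ) n
  have h2 : ((x : ℕ) : ℝ) ≤ i * n + n := by
    have : (x : ℕ) < i * n + n := by
      conv_lhs => rw [← Nat.div_add_mod (x : ℕ) n]
      have h' := Nat.mod_lt (x : ℕ) (show 0 < n by omega)
      rw [hi, Nat.mul_comm]
      omega
    exact_mod_cast this.le
  have hik : (i : ℝ) / k = (i * n) / (n * k) := by
    field_simp
  have h1k : (1 : ℝ) / k = n / (n * k) := by
    field_simp
  rw [hik, div_sub_div_same, h1k, abs_le]
  have hnk : (0:ℝ) < (n:ℝ) * k := mul_pos hn0 hk0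
  constructor
  · have hnum : (0:ℝ) ≤ ((x:ℕ):ℝ) - i * n := by linarith
    have hpos : (0:ℝ) ≤ (((x:ℕ):ℝ) - i * n) / ((n:ℝ) * k) := div_nonneg hnum hnk.le
    have : (0:ℝ) ≤ (n:ℝ) / ((n:ℝ) * k) := div_nonneg hn0.le hnk.le
    linarith
  · gcongr
    linarith

/-- The relative entropy between the product Bernoulli measure with slowly varying profile
`γ(x/(nk))` and the product Bernoulli measure which is constant equal to `γ(⌊x/n⌋/k)` on
each box of size `n` is at most `C(ε₀,κ) n`, with `C(ε₀,κ)` independent of `n` and `k`. -/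
theorem relative_entropy_product_bernoulli_boxes
    (ε₀ κ : ℝ) (hε₀ : ε₀ ∈ Set.Ioo (0 : ℝ) (1 / 2)) (hκ : 0 < κ) :
    ∃ C : ℝ, 0 < C ∧
      ∀ (γ : ℝ → ℝ), (∀ u v : ℝ, |γ u - γ v| ≤ κ * |u - v|) →
        (∀ u : ℝ, γ u ∈ Set.Ioo ε₀ (1 - ε₀)) →
        ∀ (n k : ℕ), 1 ≤ n → 1 ≤ k →
          relEnt
            (Measure.pi (fun x : Fin (n * k) => bern (γ ((x : ℝ) / (n * k)))))
            (Measure.pi (fun x : Fin (n * k) => bern (γ (((x : ℕ) / n : ℕ) / (k : ℝ)))))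
            ≤ C * n := by
  obtain ⟨hε1, hε2⟩ := hε₀
  refine ⟨κ / ε₀, div_pos hκ hε1, ?_⟩
  intro γ hlip hmem n k hn hk
  have hk0 : (0:ℝ) < k := by exact_mod_cast hk
  have hn0 : (0:ℝ) < n := by exact_mod_cast hn
  classical
  set A : (Fin (n*k) → Bool) → Fin (n*k) → ℝ :=
    fun η x => if η x then γ ((x : ℝ) / (n * k)) else 1 - γ ((x : ℝ) / (n * k)) with hA
  set B : (Fin (n*k) → Bool) → Fin (n*k) → ℝ :=
    fun η x => if η x then γ ((((x:ℕ)/n : ℕ) : ℝ) / k)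
      else 1 - γ ((((x:ℕ)/n : ℕ) : ℝ) / k) with hB
  have hAε : ∀ η x, ε₀ ≤ A η x := by
    intro η x
    have h := hmem ((x : ℝ) / (n * k))
    by_cases hx : η x <;> simp only [hA, hx, Bool.false_eq_true, if_true, if_false] <;> linarith [h.1, h.2]
  have hBε : ∀ η x, ε₀ ≤ B η x := by
    intro η x
    have h := hmem ((((x:ℕ)/n : ℕ) : ℝ) / k)
    by_cases hx : η x <;> simp only [hB, hx, Bool.false_eq_true, if_true, if_false] <;> linarith [h.1, h.2]
  have hAB : ∀ η x, |A η x - B η x| ≤ κ / k := by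
    intro η x
    have hd := close_frac n k hn hk x
    have hl := hlip ((x : ℝ) / (n * k)) ((((x:ℕ)/n : ℕ) : ℝ) / k)
    have key : |γ ((x : ℝ) / (n * k)) - γ ((((x:ℕ)/n : ℕ) : ℝ) / k)| ≤ κ / k := by
      refine hl.trans ?_
      calc κ * |(x : ℝ) / (n * k) - (((x:ℕ)/n : ℕ) : ℝ) / k| ≤ κ * (1 / k) :=
            mul_le_mul_of_nonneg_left hd hκ.le
        _ = κ / k := by ring
    by_cases hx : η x <;> simp only [hA, hB, hx, Bool.false_eq_true, if_true, if_false]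
    · exact key
    · calc |1 - γ ((x : ℝ) / (n * k)) - (1 - γ ((((x:ℕ)/n : ℕ) : ℝ) / k))|
          = |γ ((x : ℝ) / (n * k)) - γ ((((x:ℕ)/n : ℕ) : ℝ) / k)| := by
            rw [abs_sub_comm]; ring_nf
        _ ≤ κ / k := key
  have hμ : ∀ η, (((Measure.pi (fun x : Fin (n * k) => bern (γ ((x : ℝ) / (n * k)))))) {η}).toReal
      = ∏ x, A η x := by
    intro η
    rw [pi_bern_singleton, ENNReal.toReal_prod]
    exact Finset.prod_congr rfl fun x _ => ENNReal.toReal_ofReal (hε1.le.trans (hAε η x))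
  have hν : ∀ η, (((Measure.pi (fun x : Fin (n * k) =>
      bern (γ (((x : ℕ) / n : ℕ) / (k : ℝ)))))) {η}).toReal = ∏ x, B η x := by
    intro η
    rw [pi_bern_singleton, ENNReal.toReal_prod]
    exact Finset.prod_congr rfl fun x _ => ENNReal.toReal_ofReal (hε1.le.trans (hBε η x))
  have hterm : ∀ η : Fin (n*k) → Bool,
      (∏ x, A η x) * Real.log ((∏ x, A η x) / (∏ x, B η x))
        ≤ (∏ x, A η x) * (n * (κ / ε₀)) := by
    intro η
    have hAx : ∀ x, 0 < A η x := fun x => lt_of_lt_of_le hε1 (hAε η x)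
    have hBx : ∀ x, 0 < B η x := fun x => lt_of_lt_of_le hε1 (hBε η x)
    have hprodA : 0 < ∏ x, A η x := Finset.prod_pos (fun x _ => hAx x)
    refine mul_le_mul_of_nonneg_left ?_ hprodA.le
    rw [← Finset.prod_div_distrib,
      Real.log_prod (fun x _ => ne_of_gt (div_pos (hAx x) (hBx x)))]
    calc ∑ x, Real.log (A η x / B η x) ≤ ∑ _x : Fin (n*k), (κ / k) / ε₀ :=
          Finset.sum_le_sum fun x _ => log_ratio_le hε1 (hBε η x) (hAx x) (hAB η x)
      _ = (n * k : ℕ) * ((κ / k) / ε₀) := by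
          rw [Finset.sum_const, Finset.card_univ, Fintype.card_fin, nsmul_eq_mul]
      _ = n * (κ / ε₀) := by push_cast; field_simp
  have hsum : ∑ η : Fin (n*k) → Bool, ∏ x, A η x = 1 := by
    have h := Finset.prod_univ_sum (fun _ : Fin (n*k) => (Finset.univ : Finset Bool))
      (fun x b => if b then γ ((x : ℝ) / (n * k)) else 1 - γ ((x : ℝ) / (n * k)))
    rw [Fintype.piFinset_univ] at h
    calc ∑ η : Fin (n*k) → Bool, ∏ x, A η x
        = ∏ x : Fin (n*k), ∑ b : Bool,
            (if b then γ ((x : ℝ) / (n * k)) else 1 - γ ((x : ℝ) / (n * k))) := h.symm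
      _ = 1 := by simp
  calc relEnt (Measure.pi (fun x : Fin (n * k) => bern (γ ((x : ℝ) / (n * k)))))
        (Measure.pi (fun x : Fin (n * k) => bern (γ (((x : ℕ) / n : ℕ) / (k : ℝ)))))
      = ∑ η : Fin (n*k) → Bool, (∏ x, A η x) * Real.log ((∏ x, A η x) / (∏ x, B η x)) := by
        unfold relEnt
        exact Finset.sum_congr rfl fun η _ => by rw [hμ, hν]
    _ ≤ ∑ η : Fin (n*k) → Bool, (∏ x, A η x) * (n * (κ / ε₀)) :=
        Finset.sum_le_sum fun η _ => hterm η
    _ = (∑ η : Fin (n*k) → Bool, ∏ x, A η x) * (n * (κ / ε₀)) := by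
        rw [Finset.sum_mul]
    _ = κ / ε₀ * n := by rw [hsum]; ring
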